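/- Let B be a symmetric positive definite n×n real matrix, g_1,…,g_m ∈ ℝ^n, α_1,…,α_m > 0, and 𝓛 a proper subset of {1,…,m}. Let λ ∈ Δ_m be a minimizer over Δ_m of λ ↦ (1/2)⟨Σ_{i=1}^m λ_i g_i/α_i, B^{-1}(Σ_{i=1}^m λ_i g_i/α_i)⟩, and suppose s := Σ_{i∉𝓛} λ_i > 0. Then inf_{d∈ℝ^n} max_{i∈{1,…,m}} [ ⟨g_i, d⟩/α_i + (𝟙[i∉𝓛]/2)‖d‖_B² ] ≥ (1/s) · min_{d∈ℝ^n} max_{i∈{1,…,m}} [ ⟨g_i, d⟩/α_i + (1/2)‖d‖_B² ], where 𝟙[i∉𝓛] equals 1 if i ∉ 𝓛 and 0 if i ∈ 𝓛. -/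

import Mathlib

/-!
Let `x = ∑ λᵢ gᵢ/αᵢ` and `Q = ⟪x, B⁻¹x⟫`. Minimality of `λ` on the simplex gives the first-order
condition `Q ≤ ⟪gᵢ/αᵢ, B⁻¹x⟫` for every `i`, so evaluating at `d = -B⁻¹x` shows
`min_d max_i [⟪gᵢ, d⟫/αᵢ + ‖d‖_B²/2] ≤ -Q/2`. Conversely, averaging
`max_i [⟪gᵢ, d⟫/αᵢ + (𝟙[i∉𝓛]/2)‖d‖_B²]` with the weights `λ` bounds it below by
`⟪x, d⟫ + s‖d‖_B²/2`, which is at least `-Q/(2s)` by completing the square.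
-/

open scoped RealInnerProductSpace

/-- Maximum of a function over the (nonempty) finite index type `Fin m`. -/
noncomputable def fmax {m : ℕ} [NeZero m] (f : Fin m → ℝ) : ℝ :=
  Finset.univ.sup' Finset.univ_nonempty f

open Set Filter Topology

theorem nonneg_of_forall_mem_Ioc_nonneg_add_mul {a b : ℝ}
    (h : ∀ t ∈ Ioc (0 : ℝ) 1, 0 ≤ a + t * b) : 0 ≤ a := by
  have hlim : Tendsto (fun t : ℝ => a + t * b) (𝓝[>] 0) (𝓝 a) := by
    have : Tendsto (fun t : ℝ => a + t * b) (𝓝 0) (𝓝 (a + 0 * b)) :=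
      (continuous_const.add (continuous_id.mul continuous_const)).tendsto 0
    simpa using this.mono_left nhdsWithin_le_nhds
  exact ge_of_tendsto hlim (eventually_of_mem (Ioc_mem_nhdsGT one_pos) h)

section QuadraticForm

variable {E : Type*} [NormedAddCommGroup E] [InnerProductSpace ℝ E] {B Binv : E →ₗ[ℝ] E}

theorem inner_inv_comm (hsym : ∀ u v, ⟪B u, v⟫ = ⟪u, B v⟫) (hinv : ∀ u, B (Binv u) = u)
    (u v : E) : ⟪Binv u, v⟫ = ⟪u, Binv v⟫ := by
  conv_lhs => rw [← hinv v]
  rw [← hsym, hinv]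

theorem inner_inv_add_smul (hsym : ∀ u v, ⟪B u, v⟫ = ⟪u, B v⟫) (hinv : ∀ u, B (Binv u) = u)
    (x y : E) (t : ℝ) :
    ⟪x + t • y, Binv (x + t • y)⟫ = ⟪x, Binv x⟫ + 2 * t * ⟪y, Binv x⟫ + t ^ 2 * ⟪y, Binv y⟫ := by
  have hcomm : ⟪x, Binv y⟫ = ⟪y, Binv x⟫ := by
    rw [← inner_inv_comm hsym hinv, real_inner_comm]
  simp only [map_add, map_smul, inner_add_left, inner_add_right, real_inner_smul_left,
    real_inner_smul_right, hcomm]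
  ring

theorem inner_inv_le_of_isMinOn (hsym : ∀ u v, ⟪B u, v⟫ = ⟪u, B v⟫)
    (hinv : ∀ u, B (Binv u) = u) {K : Set E} (hK : Convex ℝ K) {x y : E} (hx : x ∈ K)
    (hy : y ∈ K) (hmin : IsMinOn (fun v => ⟪v, Binv v⟫) K x) : ⟪x, Binv x⟫ ≤ ⟪y, Binv x⟫ := by
  suffices 0 ≤ 2 * ⟪y - x, Binv x⟫ by
    rw [inner_sub_left] at this
    linarith
  refine nonneg_of_forall_mem_Ioc_nonneg_add_mul (b := ⟪y - x, Binv (y - x)⟫) fun t ht => ?_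
  have hle : ⟪x, Binv x⟫ ≤ ⟪x + t • (y - x), Binv (x + t • (y - x))⟫ :=
    hmin (hK.add_smul_sub_mem hx hy (Ioc_subset_Icc_self ht))
  rw [inner_inv_add_smul hsym hinv] at hle
  have : 0 ≤ t * (2 * ⟪y - x, Binv x⟫ + t * ⟪y - x, Binv (y - x)⟫) := by linarith
  exact nonneg_of_mul_nonneg_right (by linarith) ht.1

/-- Completing the square: `⟪h, d⟫ + c‖d‖_B²/2` is minimized at `d = -B⁻¹h / c`. -/
theorem neg_inner_inv_div_le (hsym : ∀ u v, ⟪B u, v⟫ = ⟪u, B v⟫) (hinv : ∀ u, B (Binv u) = u)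
    (hpos : ∀ u, 0 ≤ ⟪u, B u⟫) (h d : E) {c : ℝ} (hc : 0 < c) :
    -(⟪h, Binv h⟫ / (2 * c)) ≤ ⟪h, d⟫ + c * ⟪d, B d⟫ / 2 := by
  have hsq : ⟪c • d + Binv h, B (c • d + Binv h)⟫
      = c ^ 2 * ⟪d, B d⟫ + 2 * c * ⟪h, d⟫ + ⟪h, Binv h⟫ := by
    have hcross : ⟪Binv h, B d⟫ = ⟪h, d⟫ := by rw [← hsym, hinv]
    simp only [map_add, map_smul, hinv, inner_add_left, inner_add_right, real_inner_smul_left,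
      real_inner_smul_right, hcross, real_inner_comm h (Binv h), real_inner_comm h d]
    ring
  have key : ⟪h, d⟫ + c * ⟪d, B d⟫ / 2 - -(⟪h, Binv h⟫ / (2 * c))
      = ⟪c • d + Binv h, B (c • d + Binv h)⟫ / (2 * c) := by
    rw [hsq]
    field_simp
    ring
  have := div_nonneg (hpos (c • d + Binv h)) (by positivity : (0 : ℝ) ≤ 2 * c)
  linarith

theorem inner_inv_le_of_isMinOn_stdSimplex (hsym : ∀ u v, ⟪B u, v⟫ = ⟪u, B v⟫)
    (hinv : ∀ u, B (Binv u) = u) {ι : Type*} [Fintype ι] (v : ι → E) {lam : ι → ℝ}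
    (hlam : lam ∈ stdSimplex ℝ ι)
    (hmin : ∀ w ∈ stdSimplex ℝ ι, ⟪∑ i, lam i • v i, Binv (∑ i, lam i • v i)⟫ ≤
      ⟪∑ i, w i • v i, Binv (∑ i, w i • v i)⟫) (i : ι) :
    ⟪∑ j, lam j • v j, Binv (∑ j, lam j • v j)⟫ ≤ ⟪v i, Binv (∑ j, lam j • v j)⟫ := by
  classical
  have hL := Fintype.linearCombination_apply ℝ v
  refine inner_inv_le_of_isMinOn hsym hinv
    ((convex_stdSimplex ℝ ι).linear_image (Fintype.linearCombination ℝ v)) ⟨lam, hlam, hL lam⟩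
    ⟨_, single_mem_stdSimplex ℝ i, by simp⟩ ?_
  rw [isMinOn_iff]
  rintro _ ⟨w, hw, rfl⟩
  rw [hL]
  exact hmin w hw

end QuadraticForm

section Fmax

variable {m : ℕ} [NeZero m]

theorem le_fmax (f : Fin m → ℝ) (i : Fin m) : f i ≤ fmax f :=
  Finset.le_sup' f (Finset.mem_univ i)

theorem fmax_le {f : Fin m → ℝ} {c : ℝ} (h : ∀ i, f i ≤ c) : fmax f ≤ c :=
  Finset.sup'_le _ _ fun i _ => h i

theorem sum_mul_le_fmax {w : Fin m → ℝ} (hw : w ∈ stdSimplex ℝ (Fin m)) (f : Fin m → ℝ) :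
    ∑ i, w i * f i ≤ fmax f :=
  calc ∑ i, w i * f i ≤ ∑ i, w i * fmax f :=
        Finset.sum_le_sum fun i _ => mul_le_mul_of_nonneg_left (le_fmax f i) (hw.1 i)
    _ = fmax f := by rw [← Finset.sum_mul, hw.2, one_mul]

end Fmax

section Duality

variable {E : Type*} [NormedAddCommGroup E] [InnerProductSpace ℝ E] {B Binv : E →ₗ[ℝ] E}
  {m : ℕ} [NeZero m]

theorem bddBelow_range_fmax_inner_add (hsym : ∀ u v, ⟪B u, v⟫ = ⟪u, B v⟫)
    (hinv : ∀ u, B (Binv u) = u) (hpos : ∀ u, 0 ≤ ⟪u, B u⟫) (v : Fin m → E) :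
    BddBelow (range fun d => fmax (fun i => ⟪v i, d⟫) + ⟪d, B d⟫ / 2) := by
  refine ⟨-(⟪v 0, Binv (v 0)⟫ / (2 * 1)), ?_⟩
  rintro _ ⟨d, rfl⟩
  have := neg_inner_inv_div_le hsym hinv hpos (v 0) d one_pos
  have := le_fmax (fun i => ⟪v i, d⟫) 0
  dsimp only at *
  linarith

theorem iInf_fmax_inner_add_le (hsym : ∀ u v, ⟪B u, v⟫ = ⟪u, B v⟫)
    (hinv : ∀ u, B (Binv u) = u) (hpos : ∀ u, 0 ≤ ⟪u, B u⟫) (v : Fin m → E) {x : E}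
    (hx : ∀ i, ⟪x, Binv x⟫ ≤ ⟪v i, Binv x⟫) :
    ⨅ d, (fmax (fun i => ⟪v i, d⟫) + ⟪d, B d⟫ / 2) ≤ -(⟪x, Binv x⟫ / 2) := by
  refine (ciInf_le (bddBelow_range_fmax_inner_add hsym hinv hpos v) (-Binv x)).trans ?_
  have hmax : fmax (fun i => ⟪v i, -Binv x⟫) ≤ -⟪x, Binv x⟫ :=
    fmax_le fun i => by rw [inner_neg_right]; linarith [hx i]
  have hquad : ⟪-Binv x, B (-Binv x)⟫ = ⟪x, Binv x⟫ := by
    rw [map_neg, inner_neg_neg, hinv, real_inner_comm]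
  rw [hquad]
  linarith

theorem neg_inner_inv_div_le_iInf_fmax (hsym : ∀ u v, ⟪B u, v⟫ = ⟪u, B v⟫)
    (hinv : ∀ u, B (Binv u) = u) (hpos : ∀ u, 0 ≤ ⟪u, B u⟫) (v : Fin m → E)
    {w : Fin m → ℝ} (hw : w ∈ stdSimplex ℝ (Fin m)) (ls : Finset (Fin m))
    (hs : 0 < ∑ i ∈ lsᶜ, w i) :
    -(⟪∑ i, w i • v i, Binv (∑ i, w i • v i)⟫ / (2 * ∑ i ∈ lsᶜ, w i)) ≤
      ⨅ d, fmax fun i => ⟪v i, d⟫ + (if i ∈ ls then 0 else ⟪d, B d⟫ / 2) := by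
  refine le_ciInf fun d => le_trans ?_ (sum_mul_le_fmax hw _)
  have hsum : ∑ i, w i * (⟪v i, d⟫ + if i ∈ ls then 0 else ⟪d, B d⟫ / 2)
      = ⟪∑ i, w i • v i, d⟫ + (∑ i ∈ lsᶜ, w i) * ⟪d, B d⟫ / 2 := by
    simp only [mul_add, Finset.sum_add_distrib, sum_inner, real_inner_smul_left, mul_ite,
      mul_zero]
    congr 1
    rw [mul_div_assoc, Finset.sum_mul, ← Finset.sum_compl_add_sum ls,
      Finset.sum_ite_of_false fun i hi => Finset.mem_compl.1 hi,
      Finset.sum_ite_of_true fun i hi => hi, Finset.sum_const_zero, add_zero]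
  rw [hsum]
  exact neg_inner_inv_div_le hsym hinv hpos _ d hs

end Duality

theorem stmt19_general {n m : ℕ} [NeZero m]
    (B Binv : EuclideanSpace ℝ (Fin n) →ₗ[ℝ] EuclideanSpace ℝ (Fin n))
    (hsym : ∀ u v : EuclideanSpace ℝ (Fin n), ⟪B u, v⟫ = ⟪u, B v⟫)
    (hposdef : ∀ u : EuclideanSpace ℝ (Fin n), u ≠ 0 → 0 < ⟪u, B u⟫)
    (hinv1 : ∀ u, B (Binv u) = u)
    (g : Fin m → EuclideanSpace ℝ (Fin n)) (α : Fin m → ℝ)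
    (ls : Finset (Fin m))
    (lam : Fin m → ℝ) (hlam0 : ∀ i, 0 ≤ lam i) (hlam1 : ∑ i, lam i = 1)
    (hlamMin : ∀ lam' : Fin m → ℝ, (∀ i, 0 ≤ lam' i) → ∑ i, lam' i = 1 →
      ⟪∑ i, (lam i / α i) • g i, Binv (∑ i, (lam i / α i) • g i)⟫ / 2 ≤
        ⟪∑ i, (lam' i / α i) • g i, Binv (∑ i, (lam' i / α i) • g i)⟫ / 2)
    (s : ℝ) (hs : s = ∑ i ∈ lsᶜ, lam i) (hspos : 0 < s) :
    (1 / s) * (⨅ d : EuclideanSpace ℝ (Fin n),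
        ((fmax fun i => ⟪g i, d⟫ / α i) + ⟪d, B d⟫ / 2)) ≤
      ⨅ d : EuclideanSpace ℝ (Fin n),
        fmax fun i => ⟪g i, d⟫ / α i + (if i ∈ ls then 0 else ⟪d, B d⟫ / 2) := by
  have hpos : ∀ u, 0 ≤ ⟪u, B u⟫ := fun u => by
    rcases eq_or_ne u 0 with rfl | hu
    · simp
    · exact (hposdef u hu).le
  set v : Fin m → EuclideanSpace ℝ (Fin n) := fun i => (α i)⁻¹ • g i
  have hv : ∀ i d, ⟪g i, d⟫ / α i = ⟪v i, d⟫ := fun i d => by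
    rw [real_inner_smul_left, div_eq_inv_mul]
  have hcomb : ∀ w : Fin m → ℝ, ∑ i, (w i / α i) • g i = ∑ i, w i • v i := fun w => by
    simp only [v, div_eq_mul_inv, mul_smul]
  have hlam : lam ∈ stdSimplex ℝ (Fin m) := ⟨hlam0, hlam1⟩
  have hkkt := inner_inv_le_of_isMinOn_stdSimplex hsym hinv1 v hlam fun w hw => by
    have := hlamMin w hw.1 hw.2
    rw [hcomb, hcomb] at this
    linarith
  set x := ∑ i, lam i • v i
  simp only [hv]
  calc (1 / s) * ⨅ d, (fmax (fun i => ⟪v i, d⟫) + ⟪d, B d⟫ / 2)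
      ≤ (1 / s) * -(⟪x, Binv x⟫ / 2) := by
        gcongr
        exact iInf_fmax_inner_add_le hsym hinv1 hpos v hkkt
    _ = -(⟪x, Binv x⟫ / (2 * s)) := by field_simp
    _ ≤ _ := by
        subst hs
        exact neg_inner_inv_div_le_iInf_fmax hsym hinv1 hpos v hlam ls hspos

/-- If `λ` minimizes the dual objective
`λ ↦ ⟨∑ λ_i g_i/α_i, B⁻¹(∑ λ_i g_i/α_i)⟩/2` over the unit simplex and
`s = ∑_{i∉𝓛} λ_i > 0`, then
`inf_d max_i [⟨g_i, d⟩/α_i + (𝟙[i∉𝓛]/2)‖d‖_B²] ≥ (1/s)·min_d max_i [⟨g_i, d⟩/α_i + ‖d‖_B²/2]`. -/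
theorem stmt19 {n m : ℕ} [NeZero m]
    (B Binv : EuclideanSpace ℝ (Fin n) →ₗ[ℝ] EuclideanSpace ℝ (Fin n))
    (hsym : ∀ u v : EuclideanSpace ℝ (Fin n), ⟪B u, v⟫ = ⟪u, B v⟫)
    (hposdef : ∀ u : EuclideanSpace ℝ (Fin n), u ≠ 0 → 0 < ⟪u, B u⟫)
    (hinv1 : ∀ u, B (Binv u) = u) (hinv2 : ∀ u, Binv (B u) = u)
    (g : Fin m → EuclideanSpace ℝ (Fin n)) (α : Fin m → ℝ) (hα : ∀ i, 0 < α i)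
    (ls : Finset (Fin m)) (hproper : ls ≠ Finset.univ)
    (lam : Fin m → ℝ) (hlam0 : ∀ i, 0 ≤ lam i) (hlam1 : ∑ i, lam i = 1)
    (hlamMin : ∀ lam' : Fin m → ℝ, (∀ i, 0 ≤ lam' i) → ∑ i, lam' i = 1 →
      ⟪∑ i, (lam i / α i) • g i, Binv (∑ i, (lam i / α i) • g i)⟫ / 2 ≤
        ⟪∑ i, (lam' i / α i) • g i, Binv (∑ i, (lam' i / α i) • g i)⟫ / 2)
    (s : ℝ) (hs : s = ∑ i ∈ lsᶜ, lam i) (hspos : 0 < s) :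
    (1 / s) * (⨅ d : EuclideanSpace ℝ (Fin n),
        ((fmax fun i => ⟪g i, d⟫ / α i) + ⟪d, B d⟫ / 2)) ≤
      ⨅ d : EuclideanSpace ℝ (Fin n),
        fmax fun i => ⟪g i, d⟫ / α i + (if i ∈ ls then 0 else ⟪d, B d⟫ / 2) :=
  stmt19_general B Binv hsym hposdef hinv1 g α ls lam hlam0 hlam1 hlamMin s hs hspos
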